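/- arXiv:2101.10024 — 6 statements merged into one kernel-verified Lean document; each statement's English description precedes it below -/
import Mathlib

section
/- Let K be a subfield of ℝ, let m ≥ 1, and let S be an invertible m×m real matrix such that for all indices i, j, every entry of the matrix S · E_{ij} · S⁻¹ lies in K, where E_{ij} denotes the standard basis matrix with 1 in position (i,j) and 0 elsewhere. Then there exist a nonzero real number λ and an m×m matrix M all of whose entries lie in K such that S = λ · M. -/
/-! The `(k, l)` entry of `S * E_{ij} * S⁻¹` is `S k i * S⁻¹ j l`. Fixing `(j, l)` with
`S⁻¹ j l ≠ 0`, the matrix `S⁻¹ j l • S` has all entries in `K`, and `S` is its multiple by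
`(S⁻¹ j l)⁻¹`. -/

namespace Matrix

variable {l m n o α : Type*}

theorem mul_single_mul_apply [Fintype m] [Fintype n] [DecidableEq m] [DecidableEq n]
    [NonUnitalNonAssocSemiring α] (A : Matrix l m α) (B : Matrix n o α) (i : m) (j : n)
    (c : α) (k : l) (k' : o) :
    (A * single i j c * B) k k' = A k i * c * B j k' := by
  simp [mul_apply, single, ite_and]

theorem exists_ne_zero_smul_of_forall_mul_mem {L : Type*} [Field L] {K : Subfield L}
    (A : Matrix m n L) {c : L} (hc : c ≠ 0) (hA : ∀ k i, A k i * c ∈ K) :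
    ∃ (lam : L) (M : Matrix m n L), lam ≠ 0 ∧ (∀ k i, M k i ∈ K) ∧ A = lam • M :=
  ⟨c⁻¹, c • A, inv_ne_zero hc, fun k i => by simpa [mul_comm] using hA k i,
    (inv_smul_smul₀ hc A).symm⟩

end Matrix

/-- If `S` is an invertible real `m×m` matrix such that every entry of
`S * E_{ij} * S⁻¹` lies in the subfield `K` of `ℝ`, then `S = λ • M` for some nonzero
real `λ` and a matrix `M` with entries in `K`. -/
theorem stmt0 (K : Subfield ℝ) (m : ℕ) (hm : 1 ≤ m)
    (S : Matrix (Fin m) (Fin m) ℝ) (hS : IsUnit S)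
    (h : ∀ i j k l : Fin m,
      (S * Matrix.single i j (1 : ℝ) * S⁻¹) k l ∈ K) :
    ∃ (lam : ℝ) (M : Matrix (Fin m) (Fin m) ℝ),
      lam ≠ 0 ∧ (∀ k l, M k l ∈ K) ∧ S = lam • M := by
  have : NeZero m := ⟨by omega⟩
  have hS_inv : S⁻¹ ≠ 0 := (Matrix.isUnit_nonsing_inv_iff.mpr hS).ne_zero
  obtain ⟨j, l, hjl⟩ : ∃ j l, S⁻¹ j l ≠ 0 := by
    by_contra! hzero
    exact hS_inv (Matrix.ext hzero)
  refine S.exists_ne_zero_smul_of_forall_mul_mem hjl fun k i => ?_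
  simpa [Matrix.mul_single_mul_apply] using h i j k l
end

section
/- Let K be a subfield of ℝ, let m ≥ 1, and let Q₁, Q₂ be symmetric invertible m×m real matrices all of whose entries lie in K. Suppose there is an invertible m×m real matrix S with Q₁ = Sᵀ · Q₂ · S, and such that for all indices i, j, every entry of S · E_{ij} · S⁻¹ lies in K, where E_{ij} denotes the standard basis matrix with 1 in position (i,j) and 0 elsewhere. Then there exist μ ∈ K with μ > 0 and an invertible m×m matrix M all of whose entries lie in K such that Q₁ = μ · (Mᵀ · Q₂ · M). In particular, the quadratic forms represented by Q₁ and Q₂ are similar over K with a positive similarity factor. -/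
/-!
Since `(S * E_{ij} * S⁻¹) k l = S k i * S⁻¹ j l`, rescaling `S` by a nonzero entry `c` of `S⁻¹`
gives a matrix `M = c • S` with entries in `K`, and `Mᵀ * Q₂ * M = c² • Q₁`. Comparing a nonzero
entry of `Q₁` with the corresponding entry of `Mᵀ * Q₂ * M` shows `c² ∈ K`, so `μ = c⁻²` works.
-/

open Matrix

theorem Matrix.mul_single_one_mul_apply {n α : Type*} [Fintype n] [DecidableEq n]
    [NonAssocSemiring α] (A B : Matrix n n α) (i j k l : n) :
    (A * single i j (1 : α) * B) k l = A k i * B j l := by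
  simp [mul_apply, single, ite_and, Finset.sum_ite_eq]

theorem Subring.transpose_mul_mul_mem_matrix {R n : Type*} [Ring R] [Fintype n] [DecidableEq n]
    (K : Subring R) {M Q : Matrix n n R} (hM : M ∈ (K : Set R).matrix)
    (hQ : Q ∈ (K : Set R).matrix) : Mᵀ * Q * M ∈ (K : Set R).matrix :=
  have hMt : Mᵀ ∈ K.matrix := transpose_mem_matrix_iff.2 hM
  mul_mem (mul_mem hMt hQ) (show M ∈ K.matrix from hM)

section Subfield

variable {F n : Type*} [Field F] (K : Subfield F)

theorem Subfield.exists_ne_zero_smul_mem_matrix_of_conj_single_mem [Fintype n] [DecidableEq n]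
    [Nonempty n] {S : Matrix n n F} (hS : IsUnit S)
    (h : ∀ i j k l : n, (S * single i j (1 : F) * S⁻¹) k l ∈ K) :
    ∃ c : F, c ≠ 0 ∧ c • S ∈ (K : Set F).matrix := by
  obtain ⟨j, l, hc⟩ : ∃ j l, S⁻¹ j l ≠ 0 := by
    by_contra! h0
    exact (isUnit_nonsing_inv_iff.2 hS).ne_zero (Matrix.ext h0)
  refine ⟨S⁻¹ j l, hc, fun k i => ?_⟩
  simpa [mul_single_one_mul_apply, mul_comm] using h i j k l

theorem Subfield.mem_of_smul_mem_matrix {m : Type*} {a : F} {A : Matrix m n F} (hA : A ≠ 0)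
    (hAK : A ∈ (K : Set F).matrix) (haAK : a • A ∈ (K : Set F).matrix) : a ∈ K := by
  obtain ⟨k, l, hkl⟩ : ∃ k l, A k l ≠ 0 := by
    by_contra! h0
    exact hA (Matrix.ext h0)
  have ha : a = (a • A) k l / A k l := by
    rw [Matrix.smul_apply, smul_eq_mul, mul_div_cancel_right₀ _ hkl]
  exact ha ▸ div_mem (haAK k l) (hAK k l)

end Subfield

theorem stmt1_general (K : Subfield ℝ) (m : ℕ) (hm : 1 ≤ m)
    (Q₁ Q₂ : Matrix (Fin m) (Fin m) ℝ)
    (hQ₁u : IsUnit Q₁)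
    (hQ₁K : ∀ k l, Q₁ k l ∈ K) (hQ₂K : ∀ k l, Q₂ k l ∈ K)
    (S : Matrix (Fin m) (Fin m) ℝ) (hSu : IsUnit S)
    (hQ : Q₁ = Sᵀ * Q₂ * S)
    (h : ∀ i j k l : Fin m,
      (S * Matrix.single i j (1 : ℝ) * S⁻¹) k l ∈ K) :
    ∃ (μ : ℝ) (M : Matrix (Fin m) (Fin m) ℝ),
      μ ∈ K ∧ 0 < μ ∧ IsUnit M ∧ (∀ k l, M k l ∈ K) ∧
      Q₁ = μ • (Mᵀ * Q₂ * M) := by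
  have : NeZero m := ⟨by omega⟩
  obtain ⟨c, hc, hMK⟩ := K.exists_ne_zero_smul_mem_matrix_of_conj_single_mem hSu h
  have hMQ : (c • S)ᵀ * Q₂ * (c • S) = (c * c) • Q₁ := by
    rw [hQ, transpose_smul, smul_mul, Matrix.mul_smul, smul_mul, smul_smul]
  have hcc : c * c ∈ K := K.mem_of_smul_mem_matrix hQ₁u.ne_zero hQ₁K
    (hMQ ▸ K.toSubring.transpose_mul_mul_mem_matrix hMK hQ₂K)
  refine ⟨(c * c)⁻¹, c • S, inv_mem hcc, inv_pos.2 (mul_self_pos.2 hc),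
    hSu.smul (Units.mk0 c hc), hMK, ?_⟩
  rw [hMQ, smul_smul, inv_mul_cancel₀ (mul_ne_zero hc hc), one_smul]

/-- If the symmetric invertible real matrices `Q₁`, `Q₂` have entries in the
subfield `K` of `ℝ`, are congruent via an invertible real matrix `S` with `Q₁ = Sᵀ Q₂ S`,
and every entry of `S * E_{ij} * S⁻¹` lies in `K`, then `Q₁ = μ • (Mᵀ Q₂ M)` for some
`μ ∈ K`, `μ > 0`, and an invertible matrix `M` with entries in `K`. -/
theorem stmt1 (K : Subfield ℝ) (m : ℕ) (hm : 1 ≤ m)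
    (Q₁ Q₂ : Matrix (Fin m) (Fin m) ℝ)
    (hQ₁s : Q₁.IsSymm) (hQ₂s : Q₂.IsSymm)
    (hQ₁u : IsUnit Q₁) (hQ₂u : IsUnit Q₂)
    (hQ₁K : ∀ k l, Q₁ k l ∈ K) (hQ₂K : ∀ k l, Q₂ k l ∈ K)
    (S : Matrix (Fin m) (Fin m) ℝ) (hSu : IsUnit S)
    (hQ : Q₁ = Sᵀ * Q₂ * S)
    (h : ∀ i j k l : Fin m,
      (S * Matrix.single i j (1 : ℝ) * S⁻¹) k l ∈ K) :
    ∃ (μ : ℝ) (M : Matrix (Fin m) (Fin m) ℝ),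
      μ ∈ K ∧ 0 < μ ∧ IsUnit M ∧ (∀ k l, M k l ∈ K) ∧
      Q₁ = μ • (Mᵀ * Q₂ * M) :=
  stmt1_general K m hm Q₁ Q₂ hQ₁u hQ₁K hQ₂K S hSu hQ h
end

section
/- Let R be a commutative ring, let N ≥ 1, and let G be an N×N matrix over R. Let S be a subring of R that contains every simple cyclic product of G. Then every coefficient of the characteristic polynomial of G lies in S. -/
/-!
Expand `det (X - G)` over permutations. The fixed points of a permutation `σ` contribute
factors `X - G i i`, and its support contributes `± ∏ G i (σ i)`, which splits along the
disjoint cycles of `σ` into simple cyclic products. So every term of the expansion is a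
polynomial with coefficients in `S`.
-/

open Finset Polynomial

namespace Equiv.Perm

variable {α : Type*}

theorem IsCycleOn.exists_fin_embedding {f : Perm α} {s : Finset α} (hf : f.IsCycleOn s)
    (hs : s.Nonempty) :
    ∃ (l : ℕ) (v : Fin (l + 1) ↪ α), univ.map v = s ∧ ∀ k, v (k + 1) = f (v k) := by
  obtain ⟨a, ha⟩ := hs
  obtain ⟨l, hl⟩ : ∃ l, #s = l + 1 := Nat.exists_eq_succ_of_ne_zero (card_pos.2 ⟨a, ha⟩).ne'
  have hinj : Function.Injective fun k : Fin (l + 1) => (f ^ (k : ℕ)) a := fun j k hjk =>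
    Fin.ext <| ((hf.pow_apply_eq_pow_apply ha).1 hjk).eq_of_lt_of_lt (by omega) (by omega)
  refine ⟨l, ⟨_, hinj⟩, ?_, fun k => ?_⟩
  · ext b
    simp only [mem_map, mem_univ, true_and, Function.Embedding.coeFn_mk]
    constructor
    · rintro ⟨k, rfl⟩
      exact hf.1.mapsTo.perm_pow k ha
    · intro hb
      obtain ⟨n, hn, rfl⟩ := hf.exists_pow_eq ha hb
      exact ⟨⟨n, hl ▸ hn⟩, rfl⟩
  · rw [Function.Embedding.coeFn_mk, ← mul_apply, ← pow_succ', hf.pow_apply_eq_pow_apply ha, hl,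
      Fin.val_add, Fin.val_one']
    exact (Nat.mod_modEq _ _).trans ((Nat.mod_modEq 1 _).add_left _)

variable [DecidableEq α] [Fintype α]

theorem Disjoint.prod_support_mul {M : Type*} [CommMonoid M] {σ τ : Perm α}
    (h : Disjoint σ τ) (g : α → α → M) :
    ∏ x ∈ (σ * τ).support, g x ((σ * τ) x) =
      (∏ x ∈ σ.support, g x (σ x)) * ∏ x ∈ τ.support, g x (τ x) := by
  rw [h.support_mul, prod_union h.disjoint_support]
  congr 1 <;> refine prod_congr rfl fun x hx => ?_
  · rw [mul_apply, notMem_support.1 (h.mem_imp hx)]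
  · rw [mul_apply, notMem_support.1 (h.symm.mem_imp (apply_mem_support.2 hx))]

end Equiv.Perm

namespace Polynomial

variable {R : Type*} [Ring R] {S : Subring R}

theorem X_mem_liftsRing {T : Type*} [Ring T] (f : T →+* R) : X ∈ liftsRing f :=
  (lifts_iff_liftsRing _ _).1 (X_mem_lifts f)

theorem C_mem_liftsRing_subtype {s : R} (hs : s ∈ S) : C s ∈ liftsRing S.subtype :=
  (lifts_iff_liftsRing _ _).1 (C'_mem_lifts ⟨⟨s, hs⟩, rfl⟩)

theorem coeff_mem_of_mem_liftsRing_subtype {p : R[X]} (hp : p ∈ liftsRing S.subtype) (n : ℕ) :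
    p.coeff n ∈ S := by
  simpa using (lifts_iff_coeff_lifts p).1 ((lifts_iff_liftsRing _ p).2 hp) n

end Polynomial

namespace Matrix

variable {ι R : Type*} [Fintype ι] [DecidableEq ι] [CommRing R] {G : Matrix ι ι R}
  {S : Subring R}

theorem prod_support_perm_mem_of_cyclic_mem
    (hG : ∀ (l : ℕ) (v : Fin (l + 1) → ι), Function.Injective v →
      (∏ k : Fin (l + 1), G (v k) (v (k + 1))) ∈ S)
    (σ : Equiv.Perm ι) : ∏ i ∈ σ.support, G i (σ i) ∈ S := by
  induction σ using Equiv.Perm.cycle_induction_on with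
  | base_one => simp
  | base_cycles c hc =>
    have hcs : c.IsCycleOn (c.support : Set ι) := by
      rw [Equiv.Perm.coe_support_eq_set_support]; exact hc.isCycleOn
    obtain ⟨l, v, hv, hstep⟩ := hcs.exists_fin_embedding hc.nonempty_support
    rw [← hv, prod_map]
    simp only [← hstep]
    exact hG l v v.injective
  | induction_disjoint σ τ hd _ hσ hτ =>
    rw [hd.prod_support_mul G]
    exact S.mul_mem hσ hτ

theorem charpoly_mem_liftsRing_subtype (hdiag : ∀ i, G i i ∈ S)
    (hperm : ∀ σ : Equiv.Perm ι, ∏ i ∈ σ.support, G i (σ i) ∈ S) :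
    G.charpoly ∈ liftsRing S.subtype := by
  rw [charpoly, ← det_transpose, det_apply]
  refine sum_mem fun σ _ => zsmul_mem ?_ _
  simp only [transpose_apply]
  rw [← prod_mul_prod_compl σ.support]
  refine mul_mem ?_ (prod_mem fun i hi => ?_)
  · have hoff : ∀ i ∈ σ.support, G.charmatrix i (σ i) = -C (G i (σ i)) := fun i hi =>
      charmatrix_apply_ne _ _ _ (Equiv.Perm.mem_support.1 hi).symm
    rw [prod_congr rfl hoff, prod_neg, ← map_prod]
    exact mul_mem (pow_mem (neg_mem (one_mem _)) _) (C_mem_liftsRing_subtype (hperm σ))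
  · rw [Equiv.Perm.notMem_support.1 (mem_compl.1 hi), charmatrix_apply_eq]
    exact sub_mem (X_mem_liftsRing _) (C_mem_liftsRing_subtype (hdiag i))

end Matrix

theorem stmt4_general (R : Type*) [CommRing R] (N : ℕ)
    (G : Matrix (Fin N) (Fin N) R) (S : Subring R)
    (h : ∀ (l : ℕ) (v : Fin (l + 1) → Fin N), Function.Injective v →
      (∏ k : Fin (l + 1), G (v k) (v (k + 1))) ∈ S) :
    ∀ i, G.charpoly.coeff i ∈ S := by
  have hdiag : ∀ i, G i i ∈ S := fun i => by
    simpa using h 0 (fun _ => i) fun a b _ => Subsingleton.elim (α := Fin 1) a b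
  exact coeff_mem_of_mem_liftsRing_subtype <|
    G.charpoly_mem_liftsRing_subtype hdiag (Matrix.prod_support_perm_mem_of_cyclic_mem h)

/-- If a subring `S` of a commutative ring `R` contains every simple cyclic
product of an `N×N` matrix `G` over `R`, then every coefficient of the characteristic
polynomial of `G` lies in `S`. -/
theorem stmt4 (R : Type*) [CommRing R] (N : ℕ) (hN : 1 ≤ N)
    (G : Matrix (Fin N) (Fin N) R) (S : Subring R)
    (h : ∀ (l : ℕ) (v : Fin (l + 1) → Fin N), Function.Injective v →
      (∏ k : Fin (l + 1), G (v k) (v (k + 1))) ∈ S) :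
    ∀ i, G.charpoly.coeff i ∈ S :=
  stmt4_general R N G S h
end

section
/- Let F be a totally real number field with a fixed ring embedding ι : F → ℝ, let N ≥ 1, and let G be a symmetric N×N matrix over F such that the real matrix ι(G) (obtained by applying ι entrywise) is not positive semidefinite. Let K be the subfield of F generated over ℚ by all the cyclic products of G. Assume that for every ring homomorphism σ : F → ℝ whose restriction to K differs from the restriction of ι to K, the real matrix σ(G) (obtained by applying σ entrywise) is positive semidefinite. Then K equals the subfield of F generated over ℚ by the coefficients of the characteristic polynomial of G. -/
/-!
Each coefficient of the characteristic polynomial is a signed sum, over permutations, of products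
of entries along their cycles, so it lies in the field `K` of cyclic products. Conversely, if a
cyclic product `x` were not in the field `L` of coefficients, some real embedding `σ` would agree
with `ι` on `L` but not at `x`. Quasi-arithmeticity makes `σ(G)` positive semidefinite; but
`σ(G)` and `ι(G)` have the same characteristic polynomial, hence the same eigenvalues, so `ι(G)`
would be positive semidefinite too.
-/

open Matrix Polynomial

lemma Equiv.Perm.Disjoint.prod_support_mul_s5 {α M : Type*} [DecidableEq α] [Fintype α]
    [CommMonoid M] {σ τ : Equiv.Perm α} (h : σ.Disjoint τ) (f : α → α → M) :
    ∏ j ∈ (σ * τ).support, f j ((σ * τ) j) =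
      (∏ j ∈ σ.support, f j (σ j)) * ∏ j ∈ τ.support, f j (τ j) := by
  rw [h.support_mul, Finset.prod_union h.disjoint_support]
  congr 1 <;> refine Finset.prod_congr rfl fun j hj => ?_
  · rw [Equiv.Perm.mul_apply, Equiv.Perm.notMem_support.mp
      (Finset.disjoint_left.mp h.disjoint_support hj)]
  · rw [h.commute.eq, Equiv.Perm.mul_apply, Equiv.Perm.notMem_support.mp
      (Finset.disjoint_right.mp h.disjoint_support hj)]

namespace Matrix

variable {ι M : Type*}

def cyclicProducts [CommMonoid M] (G : Matrix ι ι M) : Set M :=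
  {x | ∃ (l : ℕ) (v : Fin (l + 1) → ι), x = ∏ k : Fin (l + 1), G (v k) (v (k + 1))}

section CommMonoid

variable [CommMonoid M] (G : Matrix ι ι M)

lemma prod_mem_cyclicProducts {n : ℕ} [NeZero n] (v : Fin n → ι) :
    ∏ k, G (v k) (v (k + 1)) ∈ G.cyclicProducts := by
  obtain ⟨l, rfl⟩ := Nat.exists_eq_succ_of_ne_zero (NeZero.ne n)
  exact ⟨l, v, rfl⟩

variable [DecidableEq ι] [Fintype ι]

lemma prod_support_mem_cyclicProducts_of_isCycle {c : Equiv.Perm ι} (hc : c.IsCycle) :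
    ∏ j ∈ c.support, G j (c j) ∈ G.cyclicProducts := by
  have hfin : IsOfFinOrder c := isOfFinOrder_of_finite c
  have : NeZero (orderOf c) := ⟨hfin.orderOf_pos.ne'⟩
  let e : Fin (orderOf c) ≃ c.support := (finEquivZPowers hfin).trans hc.zpowersEquivSupport
  have he : ∀ k, (e k : ι) = (c ^ (k : ℕ)) (Classical.choose hc) := fun k => rfl
  have hsucc : ∀ k, (e (k + 1) : ι) = c (e k) := by
    intro k
    have hval : ((k + 1 : Fin (orderOf c)) : ℕ) = ((k : ℕ) + 1) % orderOf c := by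
      simp [Fin.val_add]
    rw [he, he, hval, pow_mod_orderOf, pow_succ', Equiv.Perm.mul_apply]
  rw [← Finset.prod_coe_sort, ← e.prod_comp]
  simp only [← hsucc]
  exact G.prod_mem_cyclicProducts (fun k => (e k : ι))

lemma prod_support_mem_closure_cyclicProducts (π : Equiv.Perm ι) :
    ∏ j ∈ π.support, G j (π j) ∈ Submonoid.closure G.cyclicProducts := by
  induction π using Equiv.Perm.cycle_induction_on with
  | base_one => simp [one_mem]
  | base_cycles c hc =>
    exact Submonoid.subset_closure (G.prod_support_mem_cyclicProducts_of_isCycle hc)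
  | induction_disjoint σ τ hd _ hσ hτ =>
    rw [hd.prod_support_mul_s5 (fun a b => G a b)]
    exact mul_mem hσ hτ

end CommMonoid

lemma charpoly_coeff_mem_of_cyclicProducts_subset [DecidableEq ι] [Fintype ι] {R : Type*}
    [CommRing R] (G : Matrix ι ι R) {S : Subring R} (hS : G.cyclicProducts ⊆ S) (i : ℕ) :
    G.charpoly.coeff i ∈ S := by
  have hC : ∀ x ∈ S, C x ∈ liftsRing S.subtype := fun x hx =>
    (lifts_iff_liftsRing _ _).mp (C_mem_lifts S.subtype ⟨x, hx⟩)
  have hperm : ∀ π : Equiv.Perm ι, ∏ j ∈ π.support, G j (π j) ∈ S := fun π =>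
    Submonoid.closure_le (S := S.toSubmonoid) |>.mpr hS
      (G.prod_support_mem_closure_cyclicProducts π)
  have hdiag : ∀ j, G j j ∈ S := fun j => hS ⟨0, fun _ => j, by simp⟩
  suffices G.charpoly ∈ liftsRing S.subtype by
    obtain ⟨⟨r, hr⟩, hri⟩ :=
      (lifts_iff_coeff_lifts _).mp ((lifts_iff_liftsRing _ _).mpr this) i
    simpa [← hri] using hr
  -- After transposing, a moved index `j` contributes `G j (π j)`, as in `cyclicProducts`.
  rw [← charpoly_transpose, charpoly, det_apply]
  refine sum_mem fun π _ => zsmul_mem ?_ _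
  rw [← Finset.prod_mul_prod_compl π.support]
  refine mul_mem ?_ (prod_mem fun j hj => ?_)
  · have hmoved : ∀ j ∈ π.support, charmatrix Gᵀ (π j) j = -C (G j (π j)) := by
      intro j hj
      rw [charmatrix_apply_ne _ _ _ (Equiv.Perm.mem_support.mp hj), transpose_apply]
    rw [Finset.prod_congr rfl hmoved, Finset.prod_neg, ← map_prod]
    exact mul_mem (pow_mem (neg_mem (one_mem _)) _) (hC _ (hperm π))
  · rw [Equiv.Perm.notMem_support.mp (Finset.mem_compl.mp hj), charmatrix_apply_eq,
      transpose_apply]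
    exact sub_mem ((lifts_iff_liftsRing _ _).mp (X_mem_lifts _)) (hC _ (hdiag j))

open scoped ComplexOrder in
lemma PosSemidef.of_charpoly_eq {n 𝕜 : Type*} [Fintype n] [DecidableEq n] [RCLike 𝕜]
    {A B : Matrix n n 𝕜} (hA : A.IsHermitian) (hB : B.PosSemidef)
    (h : A.charpoly = B.charpoly) : A.PosSemidef := by
  rw [hA.posSemidef_iff_eigenvalues_nonneg,
    (hA.eigenvalues_eq_eigenvalues_iff hB.isHermitian).mpr h]
  exact hB.eigenvalues_nonneg

end Matrix

lemma AlgHom.exists_apply_ne_of_notMem_range {K E M : Type*} [Field K] [Field E] [Field M]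
    [Algebra K E] [Algebra K M] [IsAlgClosed M] [Algebra.IsSeparable K E]
    {x : E} (hx : x ∉ Set.range (algebraMap K E)) (φ : E →ₐ[K] M) :
    ∃ ψ : E →ₐ[K] M, ψ x ≠ φ x := by
  have hint : IsIntegral K x := Algebra.IsIntegral.isIntegral x
  have hroots := Algebra.IsAlgebraic.range_eval_eq_rootSet_minpoly_of_splits (F := K) M
    (fun _ => IsAlgClosed.splits _) x
  have hcard : 1 < Fintype.card ((minpoly K x).rootSet M) := by
    rw [card_rootSet_eq_natDegree (Algebra.IsSeparable.isSeparable K x) (IsAlgClosed.splits _)]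
    exact (minpoly.two_le_natDegree_iff hint).mpr hx
  obtain ⟨⟨y, hy⟩, hyφ⟩ :=
    Fintype.exists_ne_of_one_lt_card hcard ⟨φ x, hroots ▸ Set.mem_range_self φ⟩
  obtain ⟨ψ, rfl⟩ := hroots.symm ▸ hy
  exact ⟨ψ, fun h => hyφ (Subtype.ext h)⟩

namespace NumberField

variable {F : Type*} [Field F] [NumberField F]

lemma exists_ringHom_eqOn_apply_ne (L : Subfield F) {x : F} (hx : x ∉ L) (τ : F →+* ℂ) :
    ∃ σ : F →+* ℂ, (∀ y ∈ L, σ y = τ y) ∧ σ x ≠ τ x := by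
  let _ : Algebra L ℂ := (τ.comp L.subtype).toAlgebra
  let φ : F →ₐ[L] ℂ := { τ with commutes' := fun _ => rfl }
  obtain ⟨ψ, hψ⟩ := φ.exists_apply_ne_of_notMem_range (x := x) (by
    rintro ⟨y, rfl⟩
    exact hx y.2)
  exact ⟨ψ, fun y hy => ψ.commutes ⟨y, hy⟩, hψ⟩

lemma exists_realEmbedding_eqOn_apply_ne (htr : ∀ σ : F →+* ℂ, ∀ x : F, (σ x).im = 0)
    (ι : F →+* ℝ) (L : Subfield F) {x : F} (hx : x ∉ L) :
    ∃ σ : F →+* ℝ, (∀ y ∈ L, σ y = ι y) ∧ σ x ≠ ι x := by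
  obtain ⟨σ, hσL, hσx⟩ := exists_ringHom_eqOn_apply_ne L hx (Complex.ofRealHom.comp ι)
  have hσ : ComplexEmbedding.IsReal σ := ComplexEmbedding.isReal_iff.mpr <|
    RingHom.ext fun y => Complex.conj_eq_iff_im.mpr (htr σ y)
  refine ⟨hσ.embedding, fun y hy => Complex.ofReal_injective ?_, fun h => hσx ?_⟩
  · rw [hσ.coe_embedding_apply, hσL y hy]
    rfl
  · rw [← hσ.coe_embedding_apply, h]
    rfl

end NumberField

theorem stmt5_general (F : Type*) [Field F] [NumberField F]
    (htr : ∀ σ : F →+* ℂ, ∀ x : F, (σ x).im = 0)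
    (ι : F →+* ℝ) (N : ℕ)
    (G : Matrix (Fin N) (Fin N) F) (hGs : G.IsSymm)
    (hGnot : ¬ (G.map ι).PosSemidef)
    (K : Subfield F)
    (hK : K = Subfield.closure {x : F | ∃ (l : ℕ) (v : Fin (l + 1) → Fin N),
        x = ∏ k : Fin (l + 1), G (v k) (v (k + 1))})
    (hqa : ∀ σ : F →+* ℝ, (∃ x ∈ K, σ x ≠ ι x) → (G.map σ).PosSemidef) :
    K = Subfield.closure {x : F | ∃ i : ℕ, x = G.charpoly.coeff i} := by
  set L := Subfield.closure {x : F | ∃ i : ℕ, x = G.charpoly.coeff i}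
  have hcyc : G.cyclicProducts ⊆ K := hK ▸ Subfield.subset_closure
  refine le_antisymm ?_ (Subfield.closure_le.mpr ?_)
  · rw [hK, Subfield.closure_le]
    intro x hx
    by_contra hxL
    obtain ⟨σ, hσL, hσx⟩ := NumberField.exists_realEmbedding_eqOn_apply_ne htr ι L hxL
    have hcharpoly : (G.map ι).charpoly = (G.map σ).charpoly := by
      simp only [charpoly_map]
      ext i
      simp only [coeff_map]
      exact (hσL _ (Subfield.subset_closure ⟨i, rfl⟩)).symm
    exact hGnot <| PosSemidef.of_charpoly_eq (isHermitian_iff_isSymm.mpr (hGs.map ι))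
      (hqa σ ⟨x, hcyc hx, hσx⟩) hcharpoly
  · rintro y ⟨i, rfl⟩
    exact G.charpoly_coeff_mem_of_cyclicProducts_subset (S := K.toSubring) hcyc i

/-- For a symmetric matrix `G` over a totally real number field `F` (with a
fixed real embedding `ι`) satisfying Vinberg's quasi-arithmeticity conditions, the field
`K` generated by the cyclic products of `G` equals the field generated by the coefficients
of the characteristic polynomial of `G`. -/
theorem stmt5 (F : Type*) [Field F] [NumberField F]
    (htr : ∀ σ : F →+* ℂ, ∀ x : F, (σ x).im = 0)
    (ι : F →+* ℝ) (N : ℕ) (hN : 1 ≤ N)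
    (G : Matrix (Fin N) (Fin N) F) (hGs : G.IsSymm)
    (hGnot : ¬ (G.map ι).PosSemidef)
    (K : Subfield F)
    (hK : K = Subfield.closure {x : F | ∃ (l : ℕ) (v : Fin (l + 1) → Fin N),
        x = ∏ k : Fin (l + 1), G (v k) (v (k + 1))})
    (hqa : ∀ σ : F →+* ℝ, (∃ x ∈ K, σ x ≠ ι x) → (G.map σ).PosSemidef) :
    K = Subfield.closure {x : F | ∃ i : ℕ, x = G.charpoly.coeff i} :=
  stmt5_general F htr ι N G hGs hGnot K hK hqa
end

section
/- Let N ≥ 1 and let U be an invertible N×N real matrix such that U + Uᵀ is positive semidefinite. Then every complex eigenvalue of the matrix −U⁻¹ · Uᵀ (i.e., every complex root of its characteristic polynomial) has absolute value 1. -/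
/-!
If `-U⁻¹Uᵀ v = μ v` with `v ≠ 0`, then `Uᵀ v = -μ U v`, so the complex number `a = v* U v`
satisfies `conj a = v* Uᵀ v = -μ a`, whence `|μ| = 1` unless `a = 0`. If `a = 0`, then
`v* (U + Uᵀ) v = a + conj a = 0`, so positive semidefiniteness forces `(U + Uᵀ) v = 0`, i.e.
`U v = μ U v`, and `μ = 1` because `U v ≠ 0`.
-/

open Matrix
open scoped ComplexOrder

namespace Matrix

theorem exists_mulVec_eq_smul_of_isRoot_charpoly {K n : Type*} [Field K] [Fintype n]
    [DecidableEq n] {A : Matrix n n K} {μ : K} (h : A.charpoly.IsRoot μ) :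
    ∃ v ≠ 0, A *ᵥ v = μ • v := by
  have hμ : Module.End.HasEigenvalue (toLin' A) μ := by
    rwa [Module.End.hasEigenvalue_iff_isRoot_charpoly, charpoly_toLin']
  obtain ⟨v, hv⟩ := hμ.exists_hasEigenvector
  exact ⟨v, hv.2, by simpa using hv.apply_eq_smul⟩

theorem conjTranspose_map_algebraMap {𝕜 m n : Type*} [RCLike 𝕜] (A : Matrix m n ℝ) :
    (A.map (algebraMap ℝ 𝕜))ᴴ = Aᵀ.map (algebraMap ℝ 𝕜) := by
  ext i j
  simp

theorem PosSemidef.map_algebraMap {𝕜 n : Type*} [RCLike 𝕜] [Fintype n] [DecidableEq n]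
    {A : Matrix n n ℝ} (hA : A.PosSemidef) : (A.map (algebraMap ℝ 𝕜)).PosSemidef := by
  obtain ⟨B, rfl⟩ : ∃ B : Matrix n n ℝ, A = Bᴴ * B := by
    open scoped MatrixOrder in
    exact CStarAlgebra.nonneg_iff_eq_star_mul_self.mp hA.nonneg
  rw [Matrix.map_mul, conjTranspose_map _ (fun _ => by simp)]
  exact posSemidef_conjTranspose_mul_self _

section RCLike

variable {𝕜 n : Type*} [RCLike 𝕜] [Fintype n]

theorem star_dotProduct_mulVec_self (U : Matrix n n 𝕜) (v : n → 𝕜) :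
    star (star v ⬝ᵥ U *ᵥ v) = star v ⬝ᵥ Uᴴ *ᵥ v := by
  rw [star_dotProduct v (Uᴴ *ᵥ v), star_mulVec, conjTranspose_conjTranspose, dotProduct_mulVec]

theorem norm_eq_one_of_conjTranspose_mulVec_eq_neg_smul {U : Matrix n n 𝕜}
    (hU : (U + Uᴴ).PosSemidef) {v : n → 𝕜} (hUv : U *ᵥ v ≠ 0) {μ : 𝕜}
    (h : Uᴴ *ᵥ v = -(μ • U *ᵥ v)) : ‖μ‖ = 1 := by
  set a := star v ⬝ᵥ U *ᵥ v
  have ha : star a = -(μ * a) := by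
    rw [star_dotProduct_mulVec_self, h, dotProduct_neg, dotProduct_smul, smul_eq_mul]
  by_cases ha0 : a = 0
  · have hform : star v ⬝ᵥ (U + Uᴴ) *ᵥ v = 0 := by
      rw [add_mulVec, dotProduct_add, ← star_dotProduct_mulVec_self]
      change a + star a = 0
      rw [ha0, star_zero, add_zero]
    have hker := (hU.dotProduct_mulVec_zero_iff v).mp hform
    have hμ : (1 - μ) • U *ᵥ v = 0 := by
      rwa [sub_smul, one_smul, sub_eq_add_neg, ← h, ← add_mulVec]
    rw [← sub_eq_zero.mp ((smul_eq_zero.mp hμ).resolve_right hUv), norm_one]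
  · have hnorm := congrArg norm ha
    rw [norm_star, norm_neg, norm_mul] at hnorm
    exact (mul_eq_right₀ (norm_ne_zero_iff.mpr ha0)).mp hnorm.symm

end RCLike

end Matrix

theorem stmt7_general (N : ℕ) (U : Matrix (Fin N) (Fin N) ℝ)
    (hU : IsUnit U) (hpsd : (U + Uᵀ).PosSemidef) :
    ∀ μ : ℂ, ((-(U⁻¹ * Uᵀ)).charpoly.map (algebraMap ℝ ℂ)).IsRoot μ →
      ‖μ‖ = 1 := by
  intro μ hμ
  set f := algebraMap ℝ ℂ
  obtain ⟨v, hv0, hv⟩ := exists_mulVec_eq_smul_of_isRoot_charpoly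
    (A := (-(U⁻¹ * Uᵀ)).map f) (by rwa [charpoly_map])
  have hUA : U * -(U⁻¹ * Uᵀ) = -Uᵀ := by
    rw [mul_neg, ← mul_assoc, mul_nonsing_inv _ ((isUnit_iff_isUnit_det U).mp hU), one_mul]
  have hUc : (U.map f)ᴴ = -(U.map f * (-(U⁻¹ * Uᵀ)).map f) := by
    rw [← Matrix.map_mul, hUA, Matrix.map_neg _ (_root_.map_neg f), neg_neg,
      conjTranspose_map_algebraMap]
  refine norm_eq_one_of_conjTranspose_mulVec_eq_neg_smul (U := U.map f) (v := v) ?_ ?_ ?_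
  · rw [conjTranspose_map_algebraMap, ← Matrix.map_add _ (_root_.map_add f)]
    exact hpsd.map_algebraMap
  · exact fun h => hv0 <| mulVec_injective_iff_isUnit.mpr (hU.map (RingHom.mapMatrix f))
      (h.trans (mulVec_zero _).symm)
  · rw [hUc, neg_mulVec, ← mulVec_mulVec, hv, mulVec_smul]

/-- If `U` is an invertible real `N×N` matrix with `U + Uᵀ` positive
semidefinite, then every complex root of the characteristic polynomial of `-U⁻¹ Uᵀ`
has absolute value 1. -/
theorem stmt7 (N : ℕ) (hN : 1 ≤ N) (U : Matrix (Fin N) (Fin N) ℝ)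
    (hU : IsUnit U) (hpsd : (U + Uᵀ).PosSemidef) :
    ∀ μ : ℂ, ((-(U⁻¹ * Uᵀ)).charpoly.map (algebraMap ℝ ℂ)).IsRoot μ →
      ‖μ‖ = 1 :=
  stmt7_general N U hU hpsd
end

section
/- Let N ≥ 1 and let U be an N×N real matrix such that U + Uᵀ is positive definite. Then U is invertible, the matrix −U⁻¹ · Uᵀ, regarded as a complex matrix, is diagonalisable (conjugate over ℂ to a diagonal matrix), and all of its complex eigenvalues have absolute value 1. -/
/-!
Factor `U + Uᵀ = Rᴴ R` with `R` invertible and put `B = R⁻ᴴ U R⁻¹`, so that `U = Rᴴ B R` and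
`B + Bᴴ = 1`. Then `B = 1/2 + i H/2` with `H` Hermitian, so `B` is unitarily diagonalisable with
eigenvalues `b` of real part `1/2`. Since `Uᵀ = Rᴴ (1 - B) R`, the matrix `-U⁻¹Uᵀ` is conjugate
to `1 - B⁻¹`, which is diagonalised by the same unitary with eigenvalues
`(b - 1) / b = -conj b / b` of modulus one.
-/

open Matrix

variable {n : Type*} [Fintype n] [DecidableEq n]

theorem Matrix.isUnit_of_posDef_add_conjTranspose {K : Type*} [Field K] [PartialOrder K]
    [StarRing K] {A : Matrix n n K} (hA : (A + Aᴴ).PosDef) : IsUnit A := by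
  rw [← mulVec_injective_iff_isUnit, ← coe_mulVecLin, injective_iff_map_eq_zero]
  intro v hv
  rw [mulVecLin_apply] at hv
  by_contra hv0
  have := hA.dotProduct_mulVec_pos hv0
  rw [add_mulVec, dotProduct_add, hv, dotProduct_zero, zero_add, dotProduct_mulVec,
    ← star_mulVec, hv, star_zero, zero_dotProduct] at this
  exact lt_irrefl 0 this

theorem Matrix.map_nonsing_inv {R S : Type*} [CommRing R] [CommRing S] (f : R →+* S)
    {A : Matrix n n R} (hA : IsUnit A) : A⁻¹.map f = (A.map f)⁻¹ := by
  refine (inv_eq_left_inv ?_).symm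
  rw [← Matrix.map_mul, nonsing_inv_mul _ ((isUnit_iff_isUnit_det A).mp hA),
    Matrix.map_one _ f.map_zero f.map_one]

theorem Matrix.inv_mul_eq_mul_mul_inv {R : Type*} [CommRing R] {A C P D : Matrix n n R}
    (hA : IsUnit A.det) (hP : IsUnit P.det) (h : A * (P * D) = C * P) :
    A⁻¹ * C = P * D * P⁻¹ := by
  rw [← Matrix.mul_one (A⁻¹ * C), ← mul_nonsing_inv P hP, ← Matrix.mul_assoc, Matrix.mul_assoc _ C,
    ← h, ← Matrix.mul_assoc, ← Matrix.mul_assoc, nonsing_inv_mul A hA, Matrix.one_mul]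

open Polynomial in
theorem Matrix.exists_eq_of_isRoot_charpoly_conj_diagonal {R : Type*} [CommRing R] [IsDomain R]
    {P : Matrix n n R} (hP : IsUnit P) {d : n → R} {μ : R}
    (hμ : (P * diagonal d * P⁻¹).charpoly.IsRoot μ) : ∃ i, d i = μ := by
  obtain ⟨P, rfl⟩ := hP
  rw [charpoly_units_conj, charpoly_diagonal, IsRoot, eval_prod,
    Finset.prod_eq_zero_iff] at hμ
  obtain ⟨i, -, hi⟩ := hμ
  exact ⟨i, (sub_eq_zero.mp (by simpa using hi)).symm⟩

theorem Complex.norm_sub_one_div_self_of_re_eq_half {z : ℂ} (hz : z.re = 1 / 2) :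
    ‖(z - 1) / z‖ = 1 := by
  have hz0 : z ≠ 0 := Complex.ne_zero_of_re_pos (by rw [hz]; norm_num)
  have : z - 1 = -(starRingEnd ℂ) z := Complex.ext (by simp [hz]; norm_num) (by simp)
  rw [norm_div, this, norm_neg, Complex.norm_conj, div_self (norm_ne_zero_iff.mpr hz0)]

open scoped ComplexOrder MatrixOrder in
theorem Matrix.PosDef.map_complexOfReal {A : Matrix n n ℝ} (hA : A.PosDef) :
    (A.map (algebraMap ℝ ℂ)).PosDef := by
  obtain ⟨R, rfl⟩ := CStarAlgebra.nonneg_iff_eq_star_mul_self.mp hA.posSemidef.nonneg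
  have hR : IsUnit ((algebraMap ℝ ℂ).mapMatrix R) :=
    (isUnit_of_mul_isUnit_right hA.isUnit).map _
  have hmap : (star R * R).map (algebraMap ℝ ℂ) =
      ((algebraMap ℝ ℂ).mapMatrix R)ᴴ * (algebraMap ℝ ℂ).mapMatrix R := by
    rw [star_eq_conjTranspose, Matrix.map_mul, conjTranspose_map _ fun x => by simp]
    rfl
  rw [hmap]
  exact PosDef.conjTranspose_mul_self _ (mulVec_injective_iff_isUnit.mpr hR)

theorem Matrix.IsHermitian.mul_eigenvectorUnitary {𝕜 : Type*} [RCLike 𝕜] {A : Matrix n n 𝕜}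
    (hA : A.IsHermitian) : A * (hA.eigenvectorUnitary : Matrix n n 𝕜) =
      (hA.eigenvectorUnitary : Matrix n n 𝕜) * diagonal (RCLike.ofReal ∘ hA.eigenvalues) := by
  conv_lhs => arg 1; rw [hA.spectral_theorem]
  rw [Unitary.conjStarAlgAut_apply, Matrix.mul_assoc, Unitary.coe_star_mul_self, Matrix.mul_one]

theorem Matrix.exists_unitary_mul_diagonal_of_add_conjTranspose_eq_one {B : Matrix n n ℂ}
    (hB : B + Bᴴ = 1) : ∃ u ∈ unitaryGroup n ℂ, ∃ b : n → ℂ,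
      (∀ i, (b i).re = 1 / 2) ∧ B * u = u * diagonal b := by
  set H := Complex.I • (Bᴴ - B)
  have hH : H.IsHermitian := by
    simp only [H, IsHermitian, conjTranspose_smul, conjTranspose_sub, conjTranspose_conjTranspose,
      Complex.star_def, Complex.conj_I, neg_smul, ← smul_neg, neg_sub]
  have hBH : B = (1 / 2 : ℂ) • 1 + (Complex.I / 2) • H := by
    have hI : Complex.I / 2 * Complex.I = -1 / 2 := by rw [div_mul_eq_mul_div, Complex.I_mul_I]
    simp only [H, eq_sub_of_add_eq' hB, smul_smul, hI]
    module
  refine ⟨hH.eigenvectorUnitary, hH.eigenvectorUnitary.2,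
    fun i => 1 / 2 + Complex.I / 2 * hH.eigenvalues i, fun i => by simp, ?_⟩
  have hdiag : diagonal (fun i => 1 / 2 + Complex.I / 2 * hH.eigenvalues i) =
      (1 / 2 : ℂ) • 1 + (Complex.I / 2) • diagonal (RCLike.ofReal ∘ hH.eigenvalues) := by
    ext i j
    rcases eq_or_ne i j with rfl | hij <;> simp [diagonal_apply_ne, *]
  rw [hBH, hdiag, Matrix.add_mul, smul_mul_assoc, smul_mul_assoc, hH.mul_eigenvectorUnitary,
    Matrix.mul_add, Matrix.mul_smul, Matrix.mul_smul, Matrix.one_mul, Matrix.mul_one]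

open scoped ComplexOrder MatrixOrder in
theorem Matrix.exists_eq_conjTranspose_mul_mul_of_posDef_add_conjTranspose {V : Matrix n n ℂ}
    (hV : (V + Vᴴ).PosDef) :
    ∃ R B : Matrix n n ℂ, IsUnit R.det ∧ B + Bᴴ = 1 ∧ V = Rᴴ * B * R := by
  obtain ⟨R, hR⟩ := CStarAlgebra.nonneg_iff_eq_star_mul_self.mp hV.posSemidef.nonneg
  rw [star_eq_conjTranspose] at hR
  have hRu : IsUnit R.det :=
    (isUnit_iff_isUnit_det R).mp <| isUnit_of_mul_isUnit_right (hR ▸ hV.isUnit)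
  set S := R⁻¹
  have hRS : R * S = 1 := mul_nonsing_inv R hRu
  have hSR : S * R = 1 := nonsing_inv_mul R hRu
  have hSR' : Sᴴ * Rᴴ = 1 := by rw [← conjTranspose_mul, hRS, conjTranspose_one]
  have hRS' : Rᴴ * Sᴴ = 1 := by rw [← conjTranspose_mul, hSR, conjTranspose_one]
  refine ⟨R, Sᴴ * V * S, hRu, ?_, ?_⟩
  · calc Sᴴ * V * S + (Sᴴ * V * S)ᴴ = Sᴴ * (V + Vᴴ) * S := by
          simp only [conjTranspose_mul, conjTranspose_conjTranspose, Matrix.mul_add,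
            Matrix.add_mul, Matrix.mul_assoc]
      _ = (Sᴴ * Rᴴ) * (R * S) := by rw [hR]; simp only [Matrix.mul_assoc]
      _ = 1 := by rw [hSR', hRS, Matrix.one_mul]
  · calc V = (Rᴴ * Sᴴ) * V * (S * R) := by rw [hRS', hSR, Matrix.one_mul, Matrix.mul_one]
      _ = Rᴴ * (Sᴴ * V * S) * R := by simp only [Matrix.mul_assoc]

open scoped ComplexOrder in
theorem Matrix.exists_conj_diagonal_neg_inv_mul_conjTranspose {V : Matrix n n ℂ}
    (hV : (V + Vᴴ).PosDef) : ∃ (P : Matrix n n ℂ) (d : n → ℂ), IsUnit P ∧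
      -(V⁻¹ * Vᴴ) = P * diagonal d * P⁻¹ ∧ ∀ i, ‖d i‖ = 1 := by
  have hVu : IsUnit V.det := (isUnit_iff_isUnit_det V).mp (isUnit_of_posDef_add_conjTranspose hV)
  obtain ⟨R, B, hRu, hB, rfl⟩ := exists_eq_conjTranspose_mul_mul_of_posDef_add_conjTranspose hV
  obtain ⟨u, hu, b, hb, hBu⟩ := exists_unitary_mul_diagonal_of_add_conjTranspose_eq_one hB
  have hRS : R * R⁻¹ = 1 := mul_nonsing_inv R hRu
  have hb0 : ∀ i, b i ≠ 0 := fun i => Complex.ne_zero_of_re_pos (by rw [hb i]; norm_num)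
  set d : n → ℂ := fun i => (b i - 1) / b i
  have hbd : diagonal b * diagonal d = diagonal b - 1 := by
    rw [diagonal_mul_diagonal, ← diagonal_one, diagonal_sub]
    simp only [d, mul_div_cancel₀ _ (hb0 _)]
  have hPu : IsUnit (R⁻¹ * u) :=
    (isUnit_nonsing_inv_iff.mpr ((isUnit_iff_isUnit_det R).mpr hRu)).mul
      (Unitary.isUnit_coe (U := ⟨u, hu⟩))
  refine ⟨R⁻¹ * u, d, hPu, ?_, fun i => Complex.norm_sub_one_div_self_of_re_eq_half (hb i)⟩
  rw [← Matrix.mul_neg]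
  refine inv_mul_eq_mul_mul_inv hVu ((isUnit_iff_isUnit_det _).mp hPu) ?_
  calc Rᴴ * B * R * (R⁻¹ * u * diagonal d) = Rᴴ * (B * u) * diagonal d := by
        simp only [Matrix.mul_assoc]; rw [← Matrix.mul_assoc R, hRS, Matrix.one_mul]
    _ = Rᴴ * (u * diagonal b - u) := by
        rw [hBu, Matrix.mul_assoc, Matrix.mul_assoc, hbd, Matrix.mul_sub, Matrix.mul_one]
    _ = -(Rᴴ * B * R)ᴴ * (R⁻¹ * u) := by
        rw [conjTranspose_mul, conjTranspose_mul, conjTranspose_conjTranspose,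
          eq_sub_of_add_eq' hB, Matrix.neg_mul]
        simp only [Matrix.mul_assoc]
        rw [← Matrix.mul_assoc R, hRS, Matrix.one_mul, ← hBu, Matrix.sub_mul, Matrix.one_mul,
          ← Matrix.mul_neg, neg_sub]

theorem stmt8_general (N : ℕ) (U : Matrix (Fin N) (Fin N) ℝ)
    (hpd : (U + Uᵀ).PosDef) :
    IsUnit U ∧
    (∃ (P : Matrix (Fin N) (Fin N) ℂ) (d : Fin N → ℂ), IsUnit P ∧
      (-(U⁻¹ * Uᵀ)).map (algebraMap ℝ ℂ) = P * Matrix.diagonal d * P⁻¹) ∧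
    (∀ μ : ℂ, ((-(U⁻¹ * Uᵀ)).charpoly.map (algebraMap ℝ ℂ)).IsRoot μ →
      ‖μ‖ = 1) := by
  rw [← conjTranspose_eq_transpose_of_trivial] at hpd ⊢
  have hU : IsUnit U := isUnit_of_posDef_add_conjTranspose hpd
  have hf : Function.Semiconj (algebraMap ℝ ℂ) star star := fun x => by simp
  have hmap : (-(U⁻¹ * Uᴴ)).map (algebraMap ℝ ℂ) =
      -((U.map (algebraMap ℝ ℂ))⁻¹ * (U.map (algebraMap ℝ ℂ))ᴴ) := by
    rw [Matrix.map_neg _ (map_neg _), Matrix.map_mul, map_nonsing_inv _ hU, conjTranspose_map _ hf]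
  open scoped ComplexOrder in
  have hV : (U.map (algebraMap ℝ ℂ) + (U.map (algebraMap ℝ ℂ))ᴴ).PosDef := by
    simpa only [Matrix.map_add _ (map_add _), conjTranspose_map _ hf] using hpd.map_complexOfReal
  obtain ⟨P, d, hP, hconj, hd⟩ := exists_conj_diagonal_neg_inv_mul_conjTranspose hV
  refine ⟨hU, ⟨P, d, hP, hmap.trans hconj⟩, fun μ hμ => ?_⟩
  rw [← charpoly_map, hmap, hconj] at hμ
  obtain ⟨i, rfl⟩ := exists_eq_of_isRoot_charpoly_conj_diagonal hP hμ
  exact hd i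

/-- If `U` is a real `N×N` matrix with `U + Uᵀ` positive definite, then `U`
is invertible, `-U⁻¹ Uᵀ` is diagonalisable over `ℂ`, and all complex roots of its
characteristic polynomial have absolute value 1. -/
theorem stmt8 (N : ℕ) (hN : 1 ≤ N) (U : Matrix (Fin N) (Fin N) ℝ)
    (hpd : (U + Uᵀ).PosDef) :
    IsUnit U ∧
    (∃ (P : Matrix (Fin N) (Fin N) ℂ) (d : Fin N → ℂ), IsUnit P ∧
      (-(U⁻¹ * Uᵀ)).map (algebraMap ℝ ℂ) = P * Matrix.diagonal d * P⁻¹) ∧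
    (∀ μ : ℂ, ((-(U⁻¹ * Uᵀ)).charpoly.map (algebraMap ℝ ℂ)).IsRoot μ →
      ‖μ‖ = 1) :=
  stmt8_general N U hpd
end
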